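/- Let δ > 0, 0 < α < 1, κ > 0, ρ > 0, and ω(ξ) = ( (2κ/(ρ δ^{2α})) ∫_{-1}^{1} (1 - cos(ξδz))/|z|^{1+2α} dz )^{1/2}. Then lim_{ξ → 0⁺} ω'(ξ) = √κ δ^{1-α} / √((1-α)ρ) and lim_{ξ → 0⁻} ω'(ξ) = −√κ δ^{1-α} / √((1-α)ρ). In particular ω' has a jump discontinuity at the origin. -/

import Mathlib

open MeasureTheory Filter

/-- The peridynamic dispersion relation. -/
noncomputable def omega (κ ρ δ α ξ : ℝ) : ℝ :=
  Real.sqrt ((2 * κ / (ρ * δ ^ (2 * α))) *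
    ∫ z in (-1 : ℝ)..1, (1 - Real.cos (ξ * δ * z)) / |z| ^ (1 + 2 * α))

section OmegaAux
open Real

lemma absRpowInt (r : ℝ) (hr : -1 < r) (a b : ℝ) :
    IntervalIntegrable (fun u => |u| ^ r) volume a b := by
  have key : ∀ c : ℝ, IntervalIntegrable (fun u => |u| ^ r) volume 0 c := by
    intro c
    rcases le_or_gt 0 c with h | h
    · apply (intervalIntegral.intervalIntegrable_rpow' hr (a := 0) (b := c)).mono_fun
      · exact (measurable_abs.pow_const r).aestronglyMeasurable
      · filter_upwards [ae_restrict_mem measurableSet_uIoc] with x hx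
        rw [Set.uIoc_of_le h] at hx
        rw [abs_of_nonneg (le_of_lt hx.1)]
    · have h1 := (intervalIntegral.intervalIntegrable_rpow' hr (a := 0) (b := -c)).mono_fun
        (g := fun u => |u| ^ r) (measurable_abs.pow_const r).aestronglyMeasurable ?_
      · have := (IntervalIntegrable.iff_comp_neg (by simp)).mp h1
        simpa using this
      · filter_upwards [ae_restrict_mem measurableSet_uIoc] with x hx
        rw [Set.uIoc_of_le (by linarith)] at hx
        rw [abs_of_nonneg (le_of_lt hx.1)]
  exact ((key a).symm).trans (key b)

-- pointwise bound
lemma ptBound (α : ℝ) (hα : 0 < α) (c u : ℝ) :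
    |(1 - Real.cos (c * u)) / |u| ^ (1 + 2*α)| ≤ c^2/2 * |u| ^ (1 - 2*α) := by
  rcases eq_or_ne u 0 with rfl | hu
  · simp [Real.rpow_natCast]
    positivity
  · have hu' : 0 < |u| := abs_pos.2 hu
    have h1 : 0 ≤ 1 - Real.cos (c*u) := by nlinarith [Real.cos_le_one (c*u)]
    have h2 : 1 - Real.cos (c*u) ≤ (c*u)^2/2 := by
      nlinarith [Real.one_sub_sq_div_two_le_cos (x := c*u)]
    rw [abs_of_nonneg (by positivity)]
    rw [div_le_iff₀ (by positivity)]
    have : |u| ^ (1 - 2*α) * |u| ^ (1 + 2*α) = u^2 := by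
      rw [← Real.rpow_add hu', show 1 - 2*α + (1+2*α) = ((2:ℕ):ℝ) by push_cast; ring,
        Real.rpow_natCast, sq_abs]
    calc 1 - Real.cos (c*u) ≤ (c*u)^2/2 := h2
      _ = c^2/2 * u^2 := by ring
      _ = c^2/2*(|u| ^ (1 - 2*α) * |u| ^ (1 + 2*α)) := by rw [this]
      _ = c^2/2 * |u| ^ (1 - 2*α) * |u| ^ (1 + 2*α) := by ring

lemma mainMeasurable (α c : ℝ) : Measurable (fun u => (1 - Real.cos (c * u)) / |u| ^ (1 + 2*α)) :=
  ((measurable_const.sub ((Real.continuous_cos.comp (continuous_const.mul continuous_id)).measurable)).div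
    (measurable_abs.pow_const _))

lemma mainInt (α : ℝ) (hα : 0 < α) (hα1 : α < 1) (c a b : ℝ) :
    IntervalIntegrable (fun u => (1 - Real.cos (c * u)) / |u| ^ (1 + 2*α)) volume a b := by
  apply ((absRpowInt (1-2*α) (by linarith) a b).const_mul (c^2/2)).mono_fun'
    (mainMeasurable α c).aestronglyMeasurable
  filter_upwards with x
  exact ptBound α hα c x

noncomputable def Jfun (α t : ℝ) : ℝ := ∫ u in (0:ℝ)..t, (1 - Real.cos u) / u ^ (1 + 2*α)

lemma Jint_eq_abs (α : ℝ) {u : ℝ} (hu : 0 ≤ u) :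
    (1 - Real.cos u) / u ^ (1 + 2*α) = (1 - Real.cos (1 * u)) / |u| ^ (1 + 2*α) := by
  rw [one_mul, abs_of_nonneg hu]

lemma JInt (α : ℝ) (hα : 0 < α) (hα1 : α < 1) (a b : ℝ) (ha : 0 ≤ a) (hb : 0 ≤ b) :
    IntervalIntegrable (fun u => (1 - Real.cos u) / u ^ (1 + 2*α)) volume a b := by
  apply (mainInt α hα hα1 1 a b).congr
  intro x hx
  have : 0 ≤ x := by
    rcases Set.uIoc_subset_uIcc hx with ⟨h1, _⟩
    simp only [inf_le_iff] at h1
    rcases le_total a b with h|h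
    · exact le_of_lt (lt_of_le_of_lt (by simpa [Set.uIoc_of_le h] using ha) (Set.uIoc_of_le h ▸ hx).1)
    · exact le_of_lt (lt_of_le_of_lt (by simpa [Set.uIoc_of_ge h] using hb) (Set.uIoc_of_ge h ▸ hx).1)
  exact (Jint_eq_abs α this).symm

lemma JNonneg (α t : ℝ) (ht : 0 ≤ t) : 0 ≤ Jfun α t := by
  apply intervalIntegral.integral_nonneg ht
  intro u hu
  have h1 : 0 ≤ 1 - Real.cos u := by nlinarith [Real.cos_le_one u]
  have h2 : (0:ℝ) ≤ u ^ (1 + 2*α) := Real.rpow_nonneg hu.1 _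
  positivity

lemma JPos (α : ℝ) (hα : 0 < α) (hα1 : α < 1) (t : ℝ) (ht : 0 < t) (ht2 : t < Real.pi) :
    0 < Jfun α t := by
  apply intervalIntegral.intervalIntegral_pos_of_pos_on (JInt α hα hα1 0 t le_rfl ht.le) _ ht
  intro x hx
  have hx0 : 0 < x := hx.1
  have hcos : Real.cos x < 1 := by
    have h1 : (1:ℝ) - Real.cos x = 2 * Real.sin (x/2)^2 := by
      have h := Real.cos_two_mul (x/2)
      have h2 := Real.sin_sq_add_cos_sq (x/2)
      rw [show 2*(x/2) = x by ring] at h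
      nlinarith
    have : 0 < Real.sin (x/2) := Real.sin_pos_of_pos_of_lt_pi (by linarith)
      (by linarith [Real.pi_pos, hx.2])
    nlinarith
  exact div_pos (by linarith) (Real.rpow_pos_of_pos hx0 _)

lemma JintMeasurable (α : ℝ) : Measurable (fun u : ℝ => (1 - Real.cos u) / u ^ (1 + 2*α)) :=
  (continuous_const.sub Real.continuous_cos).measurable.div (measurable_id.pow_const _)

lemma JDeriv (α : ℝ) (hα : 0 < α) (hα1 : α < 1) (t : ℝ) (ht : 0 < t) :
    HasDerivAt (Jfun α) ((1 - Real.cos t) / t ^ (1 + 2*α)) t := by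
  apply intervalIntegral.integral_hasDerivAt_right (JInt α hα hα1 0 t le_rfl ht.le)
  · exact ⟨Set.univ, univ_mem, (JintMeasurable α).aestronglyMeasurable.restrict⟩
  · apply ContinuousAt.div
    · exact (continuous_const.sub Real.continuous_cos).continuousAt
    · exact (Real.continuousAt_rpow_const t _ (Or.inl (ne_of_gt ht)))
    · exact ne_of_gt (Real.rpow_pos_of_pos ht _)

lemma JUpper (α : ℝ) (hα : 0 < α) (hα1 : α < 1) (t : ℝ) (ht : 0 < t) :
    Jfun α t ≤ t ^ (2 - 2*α) / (2*(2 - 2*α)) := by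
  have hint2 : IntervalIntegrable (fun u : ℝ => u ^ (1 - 2*α) / 2) volume 0 t :=
    (intervalIntegral.intervalIntegrable_rpow' (by linarith)).div_const 2
  have h1 : Jfun α t ≤ ∫ u in (0:ℝ)..t, u ^ (1 - 2*α) / 2 := by
    apply intervalIntegral.integral_mono_on ht.le (JInt α hα hα1 0 t le_rfl ht.le) hint2
    intro u hu
    rcases eq_or_lt_of_le hu.1 with rfl | hu0
    · simp [Real.zero_rpow (by positivity : (1:ℝ) + 2*α ≠ 0)]
      positivity
    · rw [div_le_div_iff₀ (Real.rpow_pos_of_pos hu0 _) two_pos]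
      have key : u ^ (1 - 2*α) * u ^ (1 + 2*α) = u^2 := by
        rw [← Real.rpow_add hu0, show 1 - 2*α + (1+2*α) = ((2:ℕ):ℝ) by push_cast; ring,
          Real.rpow_natCast]
      nlinarith [Real.one_sub_sq_div_two_le_cos (x := u), Real.rpow_nonneg hu0.le (1-2*α),
        Real.rpow_pos_of_pos hu0 (1+2*α)]
  have h2 : ∫ u in (0:ℝ)..t, u ^ (1 - 2*α) / 2 = t ^ (2 - 2*α) / (2*(2-2*α)) := by
    rw [intervalIntegral.integral_div, integral_rpow (Or.inl (by linarith))]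
    rw [Real.zero_rpow (by intro h; linarith [h] : (1:ℝ) - 2*α + 1 ≠ 0)]
    rw [show 1 - 2*α + 1 = 2 - 2*α by ring]
    field_simp
    ring
  linarith

lemma rpow_tendsto_zero (p : ℝ) (hp : 0 < p) :
    Tendsto (fun t : ℝ => t ^ p) (nhdsWithin 0 (Set.Ioi 0)) (nhds 0) := by
  have h := ((Real.continuousAt_rpow_const 0 p (Or.inr hp.le)).continuousWithinAt
    (s := Set.Ioi 0)).tendsto
  rw [Real.zero_rpow (ne_of_gt hp)] at h
  exact h

lemma JTendstoZero (α : ℝ) (hα : 0 < α) (hα1 : α < 1) :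
    Tendsto (Jfun α) (nhdsWithin 0 (Set.Ioi 0)) (nhds 0) := by
  apply squeeze_zero' (by filter_upwards [self_mem_nhdsWithin] with t ht; exact JNonneg α t (le_of_lt ht))
    (by filter_upwards [self_mem_nhdsWithin] with t ht; exact JUpper α hα hα1 t ht)
  have := (rpow_tendsto_zero (2-2*α) (by linarith)).div_const (2*(2-2*α))
  simpa using this

lemma ALimAux : Tendsto (fun t : ℝ => Real.sin t / t) (nhdsWithin 0 {(0:ℝ)}ᶜ) (nhds 1) := by
  have h := (Real.hasDerivAt_sin 0)
  rw [hasDerivAt_iff_tendsto_slope] at h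
  simp only [Real.cos_zero] at h
  apply h.congr
  intro x
  simp [slope_def_field, div_eq_inv_mul]

lemma ALim : Tendsto (fun t : ℝ => (1 - Real.cos t) / t^2) (nhdsWithin 0 (Set.Ioi 0)) (nhds (1/2)) := by
  have hmap : Tendsto (fun t : ℝ => t/2) (nhdsWithin 0 (Set.Ioi 0)) (nhdsWithin 0 {(0:ℝ)}ᶜ) := by
    apply tendsto_nhdsWithin_of_tendsto_nhds_of_eventually_within
    · simpa using ((((continuous_id : Continuous (id : ℝ → ℝ)).div_const 2)).tendsto 0).mono_left (nhdsWithin_le_nhds)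
    · filter_upwards [self_mem_nhdsWithin] with x hx
      simp only [Set.mem_compl_iff, Set.mem_singleton_iff]
      have : (0:ℝ) < x := hx
      positivity
  have h2 : Tendsto (fun t : ℝ => (Real.sin (t/2) / (t/2))^2 / 2) (nhdsWithin 0 (Set.Ioi 0))
      (nhds (1/2)) := by
    have := ((ALimAux.comp hmap).pow 2).div_const 2
    simpa using this
  apply h2.congr'
  filter_upwards [self_mem_nhdsWithin] with t ht
  have ht0 : (t:ℝ) ≠ 0 := ne_of_gt ht
  have h1 : 1 - Real.cos t = 2 * Real.sin (t/2)^2 := by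
    have h := Real.cos_two_mul (t/2)
    have h2 := Real.sin_sq_add_cos_sq (t/2)
    rw [show 2*(t/2) = t by ring] at h
    nlinarith
  rw [h1]
  field_simp

lemma JdivLim (α : ℝ) (hα : 0 < α) (hα1 : α < 1) :
    Tendsto (fun t => Jfun α t / t ^ (2 - 2*α)) (nhdsWithin 0 (Set.Ioi 0))
      (nhds (1/(4*(1-α)))) := by
  have h2α : (2:ℝ) - 2*α ≠ 0 := by intro h; linarith [h]
  apply HasDerivAt.lhopital_zero_nhdsGT
    (f' := fun t => (1 - Real.cos t) / t ^ (1 + 2*α))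
    (g' := fun t => (2 - 2*α) * t ^ (2 - 2*α - 1))
  · filter_upwards [self_mem_nhdsWithin] with t ht
    exact JDeriv α hα hα1 t ht
  · filter_upwards [self_mem_nhdsWithin] with t ht
    exact Real.hasDerivAt_rpow_const (Or.inl (ne_of_gt ht))
  · filter_upwards [self_mem_nhdsWithin] with t ht
    have : (0:ℝ) < t ^ (2 - 2*α - 1) := Real.rpow_pos_of_pos ht _
    positivity
  · exact JTendstoZero α hα hα1
  · exact rpow_tendsto_zero _ (by linarith)
  · have base : Tendsto (fun t : ℝ => (1 - Real.cos t) / t^2 * (1/(2-2*α)))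
        (nhdsWithin 0 (Set.Ioi 0)) (nhds (1/2 * (1/(2-2*α)))) := ALim.mul_const _
    have : (1:ℝ)/2 * (1/(2-2*α)) = 1/(4*(1-α)) := by
      rw [show (4:ℝ)*(1-α) = 2*(2-2*α) by ring, one_div, one_div, one_div, mul_inv]
    rw [this] at base
    apply base.congr'
    filter_upwards [self_mem_nhdsWithin] with t ht
    have ht : (0:ℝ) < t := ht
    have h2 : t ^ (1+2*α) * t ^ (2-2*α-1) = t^2 := by
      rw [← Real.rpow_add ht, show 1 + 2*α + (2-2*α-1) = ((2:ℕ):ℝ) by push_cast; ring,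
        Real.rpow_natCast]
    have h3 : t ^ (1+2*α) * ((2-2*α) * t ^ (2-2*α-1)) = t^2 * (2-2*α) := by
      rw [← h2]; ring
    rw [div_mul_div_comm, mul_one, div_div, h3]

lemma BLim (α : ℝ) (hα : 0 < α) (hα1 : α < 1) :
    Tendsto (fun t => Real.sqrt (Jfun α t) / t ^ (1 - α)) (nhdsWithin 0 (Set.Ioi 0))
      (nhds (1/(2*Real.sqrt (1-α)))) := by
  have h := (Real.continuous_sqrt.tendsto _).comp (JdivLim α hα hα1)
  have hval : Real.sqrt (1/(4*(1-α))) = 1/(2*Real.sqrt (1-α)) := by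
    rw [one_div, Real.sqrt_inv, show (4:ℝ)*(1-α) = 2^2*(1-α) by ring,
      Real.sqrt_mul (by positivity), Real.sqrt_sq (by norm_num : (0:ℝ) ≤ 2), one_div]
  rw [hval] at h
  apply h.congr'
  filter_upwards [self_mem_nhdsWithin] with t ht
  have ht : (0:ℝ) < t := ht
  have hsq : Real.sqrt (t ^ (2-2*α)) = t ^ (1-α) := by
    rw [show (2:ℝ)-2*α = (1-α)*2 by ring, Real.rpow_mul ht.le,
      show ((2:ℝ)) = ((2:ℕ):ℝ) by norm_num, Real.rpow_natCast,
      Real.sqrt_sq (Real.rpow_nonneg ht.le _)]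
  simp only [Function.comp]
  rw [Real.sqrt_div (JNonneg α t ht.le), hsq]

lemma omega_eq (κ ρ δ α : ℝ) (hκ : 0 < κ) (hρ : 0 < ρ) (hδ : 0 < δ)
    (hα : 0 < α) (hα1 : α < 1) (ξ : ℝ) (hξ : 0 < ξ) :
    omega κ ρ δ α ξ = 2 * Real.sqrt (κ/ρ) * (ξ ^ α * Real.sqrt (Jfun α (ξ*δ))) := by
  have hc : 0 < ξ * δ := mul_pos hξ hδ
  have hstep1 : (∫ z in (-1:ℝ)..1, (1 - Real.cos (ξ * δ * z)) / |z| ^ (1 + 2 * α))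
      = 2 * ∫ z in (0:ℝ)..1, (1 - Real.cos (ξ * δ * z)) / |z| ^ (1 + 2 * α) := by
    rw [← intervalIntegral.integral_add_adjacent_intervals
      (mainInt α hα hα1 (ξ*δ) (-1) 0) (mainInt α hα hα1 (ξ*δ) 0 1)]
    have hneg : (∫ z in (-1:ℝ)..0, (1 - Real.cos (ξ * δ * z)) / |z| ^ (1 + 2 * α))
        = ∫ z in (0:ℝ)..1, (1 - Real.cos (ξ * δ * z)) / |z| ^ (1 + 2 * α) := by
      have := intervalIntegral.integral_comp_neg
        (fun z => (1 - Real.cos (ξ * δ * z)) / |z| ^ (1 + 2 * α)) (a := 0) (b := 1)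
      simp only [neg_zero, neg_one_mul, mul_neg, Real.cos_neg, abs_neg] at this
      rw [← this]
    rw [hneg]; ring
  have hstep2 : (∫ z in (0:ℝ)..1, (1 - Real.cos (ξ * δ * z)) / |z| ^ (1 + 2 * α))
      = (ξ*δ) ^ (1 + 2*α) * ∫ z in (0:ℝ)..1,
          (1 - Real.cos ((ξ*δ) * z)) / ((ξ*δ)*z) ^ (1 + 2*α) := by
    rw [← intervalIntegral.integral_const_mul]
    apply intervalIntegral.integral_congr
    intro z hz
    rw [Set.uIcc_of_le (by norm_num : (0:ℝ) ≤ 1)] at hz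
    rcases eq_or_lt_of_le hz.1 with rfl | hz0
    · simp [Real.cos_zero, Real.zero_rpow (by positivity : (1:ℝ) + 2*α ≠ 0)]
    · have : ((ξ*δ)*z) ^ (1+2*α) = (ξ*δ)^(1+2*α) * z^(1+2*α) :=
        Real.mul_rpow hc.le hz0.le
      simp only []
      rw [abs_of_nonneg hz0.le, this]
      rw [show (ξ*δ)^(1+2*α) * ((1 - Real.cos (ξ*δ*z)) / ((ξ*δ)^(1+2*α) * z^(1+2*α)))
        = ((ξ*δ)^(1+2*α) / (ξ*δ)^(1+2*α)) * ((1 - Real.cos (ξ*δ*z)) / z^(1+2*α)) by ring,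
        div_self (by positivity : (ξ*δ)^(1+2*α) ≠ 0), one_mul]
  have hstep3 : (∫ z in (0:ℝ)..1, (1 - Real.cos ((ξ*δ) * z)) / ((ξ*δ)*z) ^ (1 + 2*α))
      = (ξ*δ)⁻¹ * Jfun α (ξ*δ) := by
    have := intervalIntegral.integral_comp_mul_left
      (fun u => (1 - Real.cos u) / u ^ (1 + 2*α)) (c := ξ*δ) hc.ne' (a := 0) (b := 1)
    simp only [mul_zero, mul_one, smul_eq_mul] at this
    rw [this]; rfl
  have hsum : (2 * κ / (ρ * δ ^ (2 * α))) *
      (2 * ((ξ*δ) ^ (1 + 2*α) * ((ξ*δ)⁻¹ * Jfun α (ξ*δ))))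
      = (2*Real.sqrt (κ/ρ)*ξ^α)^2 * Jfun α (ξ*δ) := by
    have h1 : (ξ*δ) ^ (1 + 2*α) * (ξ*δ)⁻¹ = ξ^(2*α) * δ^(2*α) := by
      rw [Real.rpow_add hc, Real.rpow_one, Real.mul_rpow hξ.le hδ.le]
      field_simp
    have h2 : Real.sqrt (κ/ρ)^2 = κ/ρ := Real.sq_sqrt (by positivity)
    have h3 : (ξ^α)^2 = ξ^(2*α) := by
      rw [← Real.rpow_natCast (ξ^α) 2, ← Real.rpow_mul hξ.le]
      norm_num [mul_comm]
    rw [mul_pow, mul_pow, h2, h3]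
    rw [show (2 * κ / (ρ * δ ^ (2 * α))) * (2 * ((ξ*δ) ^ (1 + 2*α) * ((ξ*δ)⁻¹ * Jfun α (ξ*δ))))
      = (2 * κ / (ρ * δ ^ (2 * α))) * 2 * ((ξ*δ) ^ (1 + 2*α) * (ξ*δ)⁻¹) * Jfun α (ξ*δ) by ring, h1]
    have hδ2 : (δ:ℝ)^(2*α) ≠ 0 := by positivity
    field_simp
  rw [omega, hstep1, hstep2, hstep3, hsum, Real.sqrt_mul (sq_nonneg _),
    Real.sqrt_sq (by positivity)]
  ring

lemma deriv_omega_eq (κ ρ δ α : ℝ) (hκ : 0 < κ) (hρ : 0 < ρ) (hδ : 0 < δ)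
    (hα : 0 < α) (hα1 : α < 1) (ξ : ℝ) (hξ : 0 < ξ) (hξ2 : ξ*δ < Real.pi) :
    deriv (omega κ ρ δ α) ξ =
      2*Real.sqrt (κ/ρ) * δ^(1-α) * (α * (Real.sqrt (Jfun α (ξ*δ)) / (ξ*δ)^(1-α))
        + ((1 - Real.cos (ξ*δ))/(ξ*δ)^2) / (2 * (Real.sqrt (Jfun α (ξ*δ)) / (ξ*δ)^(1-α)))) := by
  have ht : 0 < ξ * δ := mul_pos hξ hδ
  have hJpos : 0 < Jfun α (ξ*δ) := JPos α hα hα1 _ ht hξ2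
  have hsq : 0 < Real.sqrt (Jfun α (ξ*δ)) := Real.sqrt_pos.2 hJpos
  -- derivative of the simplified formula
  have h1 : HasDerivAt (fun x : ℝ => x^α) (α * ξ^(α-1)) ξ :=
    Real.hasDerivAt_rpow_const (Or.inl hξ.ne')
  have hmul : HasDerivAt (fun x : ℝ => x*δ) δ ξ := by
    simpa using (hasDerivAt_id ξ).mul_const δ
  have h2 : HasDerivAt (fun x => Jfun α (x*δ))
      ((1 - Real.cos (ξ*δ)) / (ξ*δ) ^ (1 + 2*α) * δ) ξ :=
    by have := (JDeriv α hα hα1 _ ht).comp ξ hmul; exact this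
  have h3 : HasDerivAt (fun x => Real.sqrt (Jfun α (x*δ)))
      (1 / (2 * Real.sqrt (Jfun α (ξ*δ))) * ((1 - Real.cos (ξ*δ)) / (ξ*δ) ^ (1 + 2*α) * δ)) ξ :=
    (Real.hasDerivAt_sqrt hJpos.ne').comp ξ h2
  have h4 := ((h1.mul h3).const_mul (2*Real.sqrt (κ/ρ)))
  have heq : omega κ ρ δ α =ᶠ[nhds ξ] fun x => 2 * Real.sqrt (κ/ρ) * (x ^ α * Real.sqrt (Jfun α (x*δ))) := by
    filter_upwards [Ioi_mem_nhds hξ] with x hx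
    exact omega_eq κ ρ δ α hκ hρ hδ hα hα1 x hx
  rw [heq.deriv_eq, show deriv (fun x => 2 * Real.sqrt (κ/ρ) * (x ^ α * Real.sqrt (Jfun α (x*δ)))) ξ = _ from h4.deriv]
  -- now pure algebra with rpow
  have e1 : ξ^(α-1) = ξ^α/ξ := by rw [Real.rpow_sub hξ, Real.rpow_one]
  have e2 : (ξ*δ)^(1-α) = (ξ*δ)/((ξ*δ)^α) := by rw [Real.rpow_sub ht, Real.rpow_one]
  have e3 : (ξ*δ)^(1+2*α) = (ξ*δ) * ((ξ*δ)^α * (ξ*δ)^α) := by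
    rw [show (1:ℝ)+2*α = 1+(α+α) by ring, Real.rpow_add ht, Real.rpow_add ht, Real.rpow_one]
  have e4 : (ξ*δ)^α = ξ^α * δ^α := Real.mul_rpow hξ.le hδ.le
  have e5 : δ^(1-α) = δ/δ^α := by rw [Real.rpow_sub hδ, Real.rpow_one]
  have p1 : (0:ℝ) < ξ^α := Real.rpow_pos_of_pos hξ _
  have p2 : (0:ℝ) < δ^α := Real.rpow_pos_of_pos hδ _
  rw [e1, e2, e3, e4, e5]
  field_simp

theorem deriv_omega_jump_at_zero (κ ρ δ α : ℝ) (hκ : 0 < κ) (hρ : 0 < ρ)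
    (hδ : 0 < δ) (hα : 0 < α) (hα1 : α < 1) :
    Tendsto (deriv (omega κ ρ δ α)) (nhdsWithin 0 (Set.Ioi 0))
        (nhds (Real.sqrt κ * δ ^ (1 - α) / Real.sqrt ((1 - α) * ρ))) ∧
      Tendsto (deriv (omega κ ρ δ α)) (nhdsWithin 0 (Set.Iio 0))
        (nhds (-(Real.sqrt κ * δ ^ (1 - α) / Real.sqrt ((1 - α) * ρ)))) := by
  have hpos : Tendsto (deriv (omega κ ρ δ α)) (nhdsWithin 0 (Set.Ioi 0))
      (nhds (Real.sqrt κ * δ ^ (1 - α) / Real.sqrt ((1 - α) * ρ))) := by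
    have hmapδ : Tendsto (fun ξ : ℝ => ξ*δ) (nhdsWithin 0 (Set.Ioi 0))
        (nhdsWithin 0 (Set.Ioi 0)) := by
      apply tendsto_nhdsWithin_of_tendsto_nhds_of_eventually_within
      · have := ((continuous_mul_right δ).tendsto (0:ℝ)).mono_left
          (nhdsWithin_le_nhds (s := Set.Ioi 0))
        simpa using this
      · filter_upwards [self_mem_nhdsWithin] with x hx
        have : (0:ℝ) < x := hx
        exact mul_pos this hδ
    set b : ℝ := 1/(2*Real.sqrt (1-α)) with hb
    have hs : 0 < Real.sqrt (1-α) := Real.sqrt_pos.2 (by linarith)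
    have hbpos : 0 < b := by positivity
    have hB : Tendsto (fun ξ => Real.sqrt (Jfun α (ξ*δ)) / (ξ*δ)^(1-α))
        (nhdsWithin 0 (Set.Ioi 0)) (nhds b) := (BLim α hα hα1).comp hmapδ
    have hA : Tendsto (fun ξ => (1 - Real.cos (ξ*δ))/(ξ*δ)^2)
        (nhdsWithin 0 (Set.Ioi 0)) (nhds (1/2)) := ALim.comp hmapδ
    have hcomb : Tendsto (fun ξ => 2*Real.sqrt (κ/ρ) * δ^(1-α) *
        (α * (Real.sqrt (Jfun α (ξ*δ)) / (ξ*δ)^(1-α))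
        + ((1 - Real.cos (ξ*δ))/(ξ*δ)^2) / (2 * (Real.sqrt (Jfun α (ξ*δ)) / (ξ*δ)^(1-α)))))
        (nhdsWithin 0 (Set.Ioi 0))
        (nhds (2*Real.sqrt (κ/ρ) * δ^(1-α) * (α * b + (1/2)/(2*b)))) :=
      ((hB.const_mul α).add (hA.div (hB.const_mul 2) (by positivity))).const_mul _
    have hval : 2*Real.sqrt (κ/ρ) * δ^(1-α) * (α * b + (1/2)/(2*b))
        = Real.sqrt κ * δ ^ (1 - α) / Real.sqrt ((1 - α) * ρ) := by
      have hs2 : Real.sqrt (1-α)^2 = 1-α := Real.sq_sqrt (by linarith)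
      have hκρ : Real.sqrt (κ/ρ) = Real.sqrt κ / Real.sqrt ρ := Real.sqrt_div hκ.le ρ
      have hsρ : Real.sqrt ((1-α)*ρ) = Real.sqrt (1-α) * Real.sqrt ρ :=
        Real.sqrt_mul (by linarith) ρ
      have hρs : 0 < Real.sqrt ρ := Real.sqrt_pos.2 hρ
      have key : α * b + (1/2)/(2*b) = 1/(2*Real.sqrt (1-α)) := by
        rw [hb]
        field_simp
        ring_nf
        rw [hs2]
        ring
      rw [key, hκρ, hsρ]
      field_simp
    rw [hval] at hcomb
    apply hcomb.congr'
    have hπδ : 0 < Real.pi/δ := div_pos Real.pi_pos hδ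
    filter_upwards [Ioo_mem_nhdsGT_of_mem (Set.mem_Ico.2 ⟨le_refl 0, hπδ⟩)] with ξ hξ
    exact (deriv_omega_eq κ ρ δ α hκ hρ hδ hα hα1 ξ hξ.1 ((lt_div_iff₀ hδ).1 hξ.2)).symm
  refine ⟨hpos, ?_⟩
  have heven : ∀ x, omega κ ρ δ α (-x) = omega κ ρ δ α x := by
    intro x
    simp only [omega, neg_mul, Real.cos_neg]
  have hodd : ∀ x, deriv (omega κ ρ δ α) x = -(deriv (omega κ ρ δ α) (-x)) := by
    intro x
    have h : omega κ ρ δ α = fun y => omega κ ρ δ α (-y) := funext fun y => (heven y).symm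
    conv_lhs => rw [h]
    exact deriv_comp_neg (omega κ ρ δ α) x
  have hmapneg : Tendsto (fun x : ℝ => -x) (nhdsWithin 0 (Set.Iio 0))
      (nhdsWithin 0 (Set.Ioi 0)) := by
    apply tendsto_nhdsWithin_of_tendsto_nhds_of_eventually_within
    · simpa using (continuous_neg.tendsto (0:ℝ)).mono_left
        (nhdsWithin_le_nhds (s := Set.Iio 0))
    · filter_upwards [self_mem_nhdsWithin] with x hx
      have : x < 0 := hx
      simp [Set.mem_Ioi]; linarith
  have := (hpos.comp hmapneg).neg
  apply this.congr
  intro x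
  exact (hodd x).symm

end OmegaAux
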